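/- Let u : [0,T] → ℝ^p be continuous, let y_d : [0,T] → ℝ^q be continuously differentiable, let Υ ∈ ℝ^{p×q}, and set e(t) = y_d(t) − y(u)(t). Then e is continuously differentiable, and the updated input v(t) = u(t) + Υ·e′(t) satisfies, for all t ∈ [0,T], y_d(t) − y(v)(t) = (I_q − C·B·Υ)·e(t) + C·exp(tA)·B·Υ·e(0) − ∫₀ᵗ C·A·exp((t−τ)A)·B·Υ·e(τ) dτ. -/

import Mathlib

open MeasureTheory Set

section ILCAux

open intervalIntegral

noncomputable def mvCLM {a b : ℕ} (M : Matrix (Fin a) (Fin b) ℝ) : (Fin b → ℝ) →L[ℝ] (Fin a → ℝ) :=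
  LinearMap.toContinuousLinearMap (Matrix.mulVecLin M)

@[simp] lemma mvCLM_apply {a b : ℕ} (M : Matrix (Fin a) (Fin b) ℝ) (v : Fin b → ℝ) :
    mvCLM M v = M.mulVec v := rfl

noncomputable def mvBil {a b : ℕ} : Matrix (Fin a) (Fin b) ℝ →L[ℝ] (Fin b → ℝ) →L[ℝ] (Fin a → ℝ) := by
  letI := Matrix.linftyOpNormedAddCommGroup (m := Fin a) (n := Fin b) (α := ℝ)
  letI : NormedSpace ℝ (Matrix (Fin a) (Fin b) ℝ) := Matrix.linftyOpNormedSpace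
  exact LinearMap.toContinuousLinearMap
    { toFun := mvCLM
      map_add' := fun M N => by ext v i; simp [Matrix.add_mulVec]
      map_smul' := fun c M => by ext v i; simp [Matrix.smul_mulVec] }

@[simp] lemma mvBil_apply {a b : ℕ} (M : Matrix (Fin a) (Fin b) ℝ) (v : Fin b → ℝ) :
    mvBil M v = M.mulVec v := rfl

lemma exp_sub_eq {n : ℕ} (A : Matrix (Fin n) (Fin n) ℝ) (t τ : ℝ) :
    NormedSpace.exp ((t - τ) • A) = NormedSpace.exp (t • A) * NormedSpace.exp ((-τ) • A) := by
  rw [sub_eq_add_neg, add_smul, neg_smul, ← neg_smul]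
  exact Matrix.exp_add_of_commute _ _ (((Commute.refl A).smul_left t).smul_right (-τ))

lemma exp_mul_exp_neg {n : ℕ} (A : Matrix (Fin n) (Fin n) ℝ) (t : ℝ) :
    NormedSpace.exp (t • A) * NormedSpace.exp ((-t) • A) = 1 := by
  rw [← Matrix.exp_add_of_commute _ _ (((Commute.refl A).smul_left t).smul_right (-t))]
  simp [NormedSpace.exp_zero]

lemma exp_zero_eq {n : ℕ} : NormedSpace.exp (0 : Matrix (Fin n) (Fin n) ℝ) = 1 := by
  letI : NormedRing (Matrix (Fin n) (Fin n) ℝ) := Matrix.linftyOpNormedRing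
  letI : NormedAlgebra ℝ (Matrix (Fin n) (Fin n) ℝ) := Matrix.linftyOpNormedAlgebra
  exact NormedSpace.exp_zero

lemma exp_comm {n : ℕ} (A : Matrix (Fin n) (Fin n) ℝ) (t : ℝ) :
    A * NormedSpace.exp (t • A) = NormedSpace.exp (t • A) * A :=
  (((Commute.refl A).smul_right t).exp_right)

lemma cont_exp {n : ℕ} (A : Matrix (Fin n) (Fin n) ℝ) :
    Continuous fun t : ℝ => NormedSpace.exp (t • A) := by
  letI : NormedRing (Matrix (Fin n) (Fin n) ℝ) := Matrix.linftyOpNormedRing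
  letI : NormedAlgebra ℝ (Matrix (Fin n) (Fin n) ℝ) := Matrix.linftyOpNormedAlgebra
  exact continuous_iff_continuousAt.2 fun t =>
    (hasDerivAt_exp_smul_const' (𝕂 := ℝ) A t).continuousAt

lemma cont_master {n k : ℕ} (A : Matrix (Fin n) (Fin n) ℝ) (M : Matrix (Fin k) (Fin n) ℝ)
    {s : Set ℝ} {c : ℝ → ℝ} (hc : Continuous c) {g : ℝ → Fin n → ℝ} (hg : ContinuousOn g s) :
    ContinuousOn (fun τ => M.mulVec ((NormedSpace.exp (c τ • A)).mulVec (g τ))) s := by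
  have h1 : ContinuousOn (fun τ => mvBil (NormedSpace.exp (c τ • A)) (g τ)) s :=
    ContinuousOn.clm_apply ((mvBil.continuous.comp ((cont_exp A).comp hc)).continuousOn) hg
  simpa [Function.comp_def] using (mvCLM M).continuous.comp_continuousOn h1

lemma aux_deriv {n k : ℕ} (A : Matrix (Fin n) (Fin n) ℝ) (M : Matrix (Fin k) (Fin n) ℝ)
    (x : ℝ → Fin n → ℝ) (x' : Fin n → ℝ) {t : ℝ} {s : Set ℝ}
    (hx : HasDerivWithinAt x x' s t) :
    HasDerivWithinAt (fun τ => M.mulVec ((NormedSpace.exp (τ • A)).mulVec (x τ)))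
      (M.mulVec ((A * NormedSpace.exp (t • A)).mulVec (x t) +
        (NormedSpace.exp (t • A)).mulVec x')) s t := by
  letI : NormedRing (Matrix (Fin n) (Fin n) ℝ) := Matrix.linftyOpNormedRing
  letI : NormedAlgebra ℝ (Matrix (Fin n) (Fin n) ℝ) := Matrix.linftyOpNormedAlgebra
  have hexp : HasDerivAt (fun τ : ℝ => NormedSpace.exp (τ • A))
      (A * NormedSpace.exp (t • A)) t := hasDerivAt_exp_smul_const' A t
  have hc : HasDerivWithinAt (fun τ : ℝ =>
      (mvBil : Matrix (Fin n) (Fin n) ℝ →L[ℝ] _) (NormedSpace.exp (τ • A)))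
      (mvBil (A * NormedSpace.exp (t • A))) s t :=
    (((mvBil : Matrix (Fin n) (Fin n) ℝ →L[ℝ] _).hasFDerivAt.comp_hasDerivAt t
      hexp)).hasDerivWithinAt
  have := hc.clm_apply hx
  have h2 := (mvCLM M).hasFDerivAt.comp_hasDerivWithinAt t this
  simpa [Function.comp_def] using h2

lemma aux_deriv_neg {n : ℕ} (A : Matrix (Fin n) (Fin n) ℝ)
    (x : ℝ → Fin n → ℝ) (x' : Fin n → ℝ) {t : ℝ} {s : Set ℝ}
    (hx : HasDerivWithinAt x x' s t) :
    HasDerivWithinAt (fun τ => (NormedSpace.exp ((-τ) • A)).mulVec (x τ))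
      ((NormedSpace.exp ((-t) • A)).mulVec x' -
        A.mulVec ((NormedSpace.exp ((-t) • A)).mulVec (x t))) s t := by
  have h := aux_deriv (-A) (1 : Matrix (Fin n) (Fin n) ℝ) x x' hx
  simp only [smul_neg, ← neg_smul, Matrix.one_mulVec, neg_mul, Matrix.neg_mulVec,
    Matrix.mulVec_add, ← Matrix.mulVec_mulVec, neg_add_eq_sub] at h
  convert h using 2

section FTC
variable {E : Type*} [NormedAddCommGroup E] [NormedSpace ℝ E] [CompleteSpace E]

lemma ftc1 {T : ℝ} {F : ℝ → E} (hF : ContinuousOn F (Icc 0 T)) {t : ℝ} (ht : t ∈ Icc (0:ℝ) T) :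
    HasDerivWithinAt (fun b => ∫ τ in (0:ℝ)..b, F τ) (F t) (Icc 0 T) t := by
  haveI : Fact (t ∈ Icc (0:ℝ) T) := ⟨ht⟩
  exact integral_hasDerivWithinAt_right
    ((hF.mono (by rw [uIcc_of_le ht.1]; exact Icc_subset_Icc le_rfl ht.2)).intervalIntegrable)
    (hF.stronglyMeasurableAtFilter_nhdsWithin measurableSet_Icc t)
    (hF t ht)

lemma ftc2 {T : ℝ} {g g' : ℝ → E}
    (hg : ∀ τ ∈ Icc (0:ℝ) T, HasDerivWithinAt g (g' τ) (Icc 0 T) τ)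
    (hg' : ContinuousOn g' (Icc 0 T)) {t : ℝ} (ht : t ∈ Icc (0:ℝ) T) :
    ∫ τ in (0:ℝ)..t, g' τ = g t - g 0 := by
  have hsub : Icc (0:ℝ) t ⊆ Icc 0 T := Icc_subset_Icc le_rfl ht.2
  refine integral_eq_sub_of_hasDeriv_right_of_le ht.1
    (fun τ hτ => ((hg τ (hsub hτ)).continuousWithinAt).mono hsub)
    (fun τ hτ => ?_)
    ((hg'.mono (by rwa [uIcc_of_le ht.1])).intervalIntegrable)
  have hτT : τ ∈ Ioo (0:ℝ) T := ⟨hτ.1, lt_of_lt_of_le hτ.2 ht.2⟩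
  exact (((hg τ (Ioo_subset_Icc_self hτT)).hasDerivAt
    (Icc_mem_nhds hτT.1 hτT.2)).hasDerivWithinAt)

omit [NormedSpace ℝ E] [CompleteSpace E] in
lemma intOn {T : ℝ} {F : ℝ → E} (hF : ContinuousOn F (Icc 0 T)) {t : ℝ}
    (ht : t ∈ Icc (0:ℝ) T) : IntervalIntegrable F volume 0 t :=
  (hF.mono (by rw [uIcc_of_le ht.1]; exact Icc_subset_Icc le_rfl ht.2)).intervalIntegrable

end FTC

lemma pull {n k : ℕ} (A : Matrix (Fin n) (Fin n) ℝ) (M : Matrix (Fin k) (Fin n) ℝ) (t : ℝ)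
    (h : ℝ → Fin n → ℝ)
    (hint : IntervalIntegrable (fun τ => (NormedSpace.exp ((-τ) • A)).mulVec (h τ)) volume 0 t) :
    (∫ τ in (0:ℝ)..t, M.mulVec ((NormedSpace.exp ((t - τ) • A)).mulVec (h τ)))
      = (M * NormedSpace.exp (t • A)).mulVec
          (∫ τ in (0:ℝ)..t, (NormedSpace.exp ((-τ) • A)).mulVec (h τ)) := by
  have := (mvCLM (M * NormedSpace.exp (t • A))).intervalIntegral_comp_comm hint
  rw [mvCLM_apply] at this
  rw [← this]
  refine integral_congr (fun τ _ => ?_)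
  simp [Matrix.mulVec_mulVec, exp_sub_eq, Matrix.mul_assoc]

end ILCAux

/-- **one step of D-type ILC on the error.** With `e = y_d − y(u)` and the
updated input `v = u + Υ·e′`, the new error satisfies
`y_d − y(v) = (I − CBΥ)·e + C·exp(tA)·B·Υ·e(0) − ∫₀ᵗ C·A·exp((t−τ)A)·B·Υ·e(τ) dτ`. -/
theorem dtype_ilc_error_recursion
    (T : ℝ) (hT : 0 < T) (n p q : ℕ)
    (A : Matrix (Fin n) (Fin n) ℝ) (B : Matrix (Fin n) (Fin p) ℝ)
    (C : Matrix (Fin q) (Fin n) ℝ) (x₀ : Fin n → ℝ)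
    (w : ℝ → Fin n → ℝ) (hw : ContinuousOn w (Icc 0 T))
    (u : ℝ → Fin p → ℝ) (hu : ContinuousOn u (Icc 0 T))
    (Υ : Matrix (Fin p) (Fin q) ℝ)
    (yd yd' : ℝ → Fin q → ℝ)
    (hyd : ∀ t ∈ Icc (0:ℝ) T, HasDerivWithinAt yd (yd' t) (Icc 0 T) t)
    (hyd' : ContinuousOn yd' (Icc 0 T))
    (yu zu : ℝ → Fin q → ℝ)
    (hyu : ∀ t, yu t = C.mulVec ((NormedSpace.exp (t • A)).mulVec x₀) +
      ∫ τ in (0:ℝ)..t,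
        C.mulVec ((NormedSpace.exp ((t - τ) • A)).mulVec (B.mulVec (u τ) + w τ)))
    (hzu : ∀ t, zu t = C.mulVec ((A * NormedSpace.exp (t • A)).mulVec x₀) +
      C.mulVec (B.mulVec (u t) + w t) +
      ∫ τ in (0:ℝ)..t,
        C.mulVec ((A * NormedSpace.exp ((t - τ) • A)).mulVec (B.mulVec (u τ) + w τ)))
    (e e' : ℝ → Fin q → ℝ)
    (he : ∀ t, e t = yd t - yu t)
    (he' : ∀ t, e' t = yd' t - zu t)
    (v : ℝ → Fin p → ℝ) (hv : ∀ t, v t = u t + Υ.mulVec (e' t))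
    (yv : ℝ → Fin q → ℝ)
    (hyv : ∀ t, yv t = C.mulVec ((NormedSpace.exp (t • A)).mulVec x₀) +
      ∫ τ in (0:ℝ)..t,
        C.mulVec ((NormedSpace.exp ((t - τ) • A)).mulVec (B.mulVec (v τ) + w τ))) :
    (∀ t ∈ Icc (0:ℝ) T, HasDerivWithinAt e (e' t) (Icc 0 T) t) ∧
      ContinuousOn e' (Icc 0 T) ∧
      ∀ t ∈ Icc (0:ℝ) T,
        yd t - yv t =
          ((1 : Matrix (Fin q) (Fin q) ℝ) - C * B * Υ).mulVec (e t) +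
            (C * NormedSpace.exp (t • A) * B * Υ).mulVec (e 0) -
            ∫ τ in (0:ℝ)..t, (C * A * NormedSpace.exp ((t - τ) • A) * B * Υ).mulVec (e τ) := by
  
  set f : ℝ → Fin n → ℝ := fun τ => B.mulVec (u τ) + w τ with hfdef
  have contf : ContinuousOn f (Icc 0 T) :=
    ((mvCLM B).continuous.comp_continuousOn hu).add hw
  set G : ℝ → Fin n → ℝ :=
    fun t => ∫ τ in (0:ℝ)..t, (NormedSpace.exp ((-τ) • A)).mulVec (f τ) with hGdef
  have contΨf : ContinuousOn (fun τ => (NormedSpace.exp ((-τ) • A)).mulVec (f τ)) (Icc 0 T) := by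
    have := cont_master A (1 : Matrix (Fin n) (Fin n) ℝ) continuous_neg contf
    simpa [Matrix.one_mulVec] using this
  have hGd : ∀ t ∈ Icc (0:ℝ) T,
      HasDerivWithinAt G ((NormedSpace.exp ((-t) • A)).mulVec (f t)) (Icc 0 T) t :=
    fun t ht => ftc1 contΨf ht
  have contG : ContinuousOn G (Icc 0 T) := fun t ht => (hGd t ht).continuousWithinAt
  -- closed form for yu
  have hyu_eq : ∀ t ∈ Icc (0:ℝ) T, yu t =
      C.mulVec ((NormedSpace.exp (t • A)).mulVec x₀) +
        C.mulVec ((NormedSpace.exp (t • A)).mulVec (G t)) := by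
    intro t ht
    rw [hyu t, pull A C t f (intOn contΨf ht)]
    simp only [Matrix.mulVec_mulVec]
    rfl
  -- the ∫ term of zu in closed form
  have hint_eq : ∀ t ∈ Icc (0:ℝ) T,
      (∫ τ in (0:ℝ)..t,
        C.mulVec ((A * NormedSpace.exp ((t - τ) • A)).mulVec (f τ)))
        = (C * A * NormedSpace.exp (t • A)).mulVec (G t) := by
    intro t ht
    have h1 : EqOn (fun τ => C.mulVec ((A * NormedSpace.exp ((t - τ) • A)).mulVec (f τ)))
        (fun τ => (C * A).mulVec ((NormedSpace.exp ((t - τ) • A)).mulVec (f τ)))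
        (uIcc (0:ℝ) t) := by
      intro τ _
      simp [Matrix.mulVec_mulVec, Matrix.mul_assoc]
    rw [intervalIntegral.integral_congr h1, pull A (C * A) t f (intOn contΨf ht)]
  -- derivative of yu is zu
  have hyud : ∀ t ∈ Icc (0:ℝ) T, HasDerivWithinAt yu (zu t) (Icc 0 T) t := by
    intro t ht
    have d1 := aux_deriv A C (fun _ => x₀) 0 (hasDerivWithinAt_const t (Icc 0 T) x₀)
    have d2 := aux_deriv A C G ((NormedSpace.exp ((-t) • A)).mulVec (f t)) (hGd t ht)
    have dsum := d1.add d2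
    have hval : zu t =
        C.mulVec ((A * NormedSpace.exp (t • A)).mulVec ((fun _ => x₀) t) +
          (NormedSpace.exp (t • A)).mulVec 0) +
        C.mulVec ((A * NormedSpace.exp (t • A)).mulVec (G t) +
          (NormedSpace.exp (t • A)).mulVec
            ((NormedSpace.exp ((-t) • A)).mulVec (f t))) := by
      rw [hzu t, hint_eq t ht]
      have h1 : NormedSpace.exp (t • A) * (NormedSpace.exp ((-t) • A) * B) = B := by
        rw [← Matrix.mul_assoc, exp_mul_exp_neg, Matrix.one_mul]
      simp only [hfdef, Matrix.mulVec_zero, add_zero, Matrix.mulVec_add, Matrix.mulVec_mulVec,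
        Matrix.mul_assoc, h1, exp_mul_exp_neg, Matrix.mul_one, Matrix.one_mulVec]
      try abel
    rw [hval]
    exact dsum.congr (fun y hy => (hyu_eq y hy)) (hyu_eq t ht)
  -- part 1
  have part1 : ∀ t ∈ Icc (0:ℝ) T, HasDerivWithinAt e (e' t) (Icc 0 T) t := by
    intro t ht
    rw [he' t]
    exact ((hyd t ht).sub (hyud t ht)).congr (fun y _ => he y) (he t)
  -- part 2
  have zu_closed2 : ∀ t ∈ Icc (0:ℝ) T, zu t =
      (C * A).mulVec ((NormedSpace.exp (t • A)).mulVec x₀) + C.mulVec (f t)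
        + (C * A).mulVec ((NormedSpace.exp (t • A)).mulVec (G t)) := by
    intro t ht
    rw [hzu t, hint_eq t ht]
    simp only [hfdef, Matrix.mulVec_mulVec, Matrix.mul_assoc]
    try abel
  have contzu : ContinuousOn zu (Icc 0 T) := by
    refine ContinuousOn.congr ?_ (fun t ht => zu_closed2 t ht)
    exact ((cont_master A (C * A) continuous_id continuousOn_const).add
      ((mvCLM C).continuous.comp_continuousOn contf)).add
      (cont_master A (C * A) continuous_id contG)
  have part2 : ContinuousOn e' (Icc 0 T) :=
    ContinuousOn.congr (hyd'.sub contzu) (fun t _ => he' t)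
  refine ⟨part1, part2, ?_⟩
  -- part 3
  intro t ht
  have conte : ContinuousOn e (Icc 0 T) := fun s hs => (part1 s hs).continuousWithinAt
  have contv : ContinuousOn v (Icc 0 T) :=
    ContinuousOn.congr (hu.add ((mvCLM Υ).continuous.comp_continuousOn part2))
      (fun s _ => hv s)
  set h₂ : ℝ → Fin n → ℝ := fun τ => (B * Υ).mulVec (e' τ) with hh₂
  have conth₂ : ContinuousOn h₂ (Icc 0 T) :=
    (mvCLM (B * Υ)).continuous.comp_continuousOn part2
  have contΨ₂ : ContinuousOn (fun τ => (NormedSpace.exp ((-τ) • A)).mulVec (h₂ τ)) (Icc 0 T) := by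
    have := cont_master A (1 : Matrix (Fin n) (Fin n) ℝ) continuous_neg conth₂
    simpa [Matrix.one_mulVec] using this
  set H : ℝ → Fin n → ℝ :=
    fun s => ∫ τ in (0:ℝ)..s, (NormedSpace.exp ((-τ) • A)).mulVec (h₂ τ) with hHdef
  -- difference of outputs
  have contvInt : ContinuousOn
      (fun τ => C.mulVec ((NormedSpace.exp ((t - τ) • A)).mulVec (B.mulVec (v τ) + w τ)))
      (Icc 0 T) :=
    cont_master A C (continuous_const.sub continuous_id)
      (((mvCLM B).continuous.comp_continuousOn contv).add hw)
  have contuInt : ContinuousOn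
      (fun τ => C.mulVec ((NormedSpace.exp ((t - τ) • A)).mulVec (f τ)))
      (Icc 0 T) :=
    cont_master A C (continuous_const.sub continuous_id) contf
  have diff_eq : yv t - yu t = (C * NormedSpace.exp (t • A)).mulVec (H t) := by
    rw [hyv t, hyu t, add_sub_add_left_eq_sub,
      ← intervalIntegral.integral_sub (intOn contvInt ht) (intOn contuInt ht)]
    have h1 : EqOn
        (fun τ => C.mulVec ((NormedSpace.exp ((t - τ) • A)).mulVec (B.mulVec (v τ) + w τ)) -
          C.mulVec ((NormedSpace.exp ((t - τ) • A)).mulVec (f τ)))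
        (fun τ => C.mulVec ((NormedSpace.exp ((t - τ) • A)).mulVec (h₂ τ)))
        (uIcc (0:ℝ) t) := by
      intro τ _
      have hvec : (B.mulVec (v τ) + w τ) - f τ = h₂ τ := by
        simp [hv τ, hfdef, hh₂, Matrix.mulVec_add, Matrix.mulVec_mulVec]
      simp only [← Matrix.mulVec_sub, ← hvec]
    rw [intervalIntegral.integral_congr h1, pull A C t h₂ (intOn contΨ₂ ht), hHdef]
  -- integration by parts
  set K : ℝ → Fin n → ℝ :=
    fun τ => A.mulVec ((NormedSpace.exp ((-τ) • A)).mulVec ((B * Υ).mulVec (e τ))) with hKdef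
  have contBe : ContinuousOn (fun τ => (B * Υ).mulVec (e τ)) (Icc 0 T) :=
    (mvCLM (B * Υ)).continuous.comp_continuousOn conte
  have contK : ContinuousOn K (Icc 0 T) := cont_master A A continuous_neg contBe
  set Φ : ℝ → Fin n → ℝ :=
    fun τ => (NormedSpace.exp ((-τ) • A)).mulVec ((B * Υ).mulVec (e τ)) with hΦdef
  have hΦd : ∀ τ ∈ Icc (0:ℝ) T, HasDerivWithinAt Φ
      ((NormedSpace.exp ((-τ) • A)).mulVec (h₂ τ) - K τ) (Icc 0 T) τ := by
    intro τ hτ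
    have hx : HasDerivWithinAt (fun s => (B * Υ).mulVec (e s)) ((B * Υ).mulVec (e' τ))
        (Icc 0 T) τ := by
      have := (mvCLM (B * Υ)).hasFDerivAt.comp_hasDerivWithinAt τ (part1 τ hτ)
      simpa [Function.comp_def] using this
    exact aux_deriv_neg A (fun s => (B * Υ).mulVec (e s)) ((B * Υ).mulVec (e' τ)) hx
  have ibp : ∫ τ in (0:ℝ)..t,
      ((NormedSpace.exp ((-τ) • A)).mulVec (h₂ τ) - K τ) = Φ t - Φ 0 :=
    ftc2 hΦd (contΨ₂.sub contK) ht
  have Hsplit : H t = (Φ t - Φ 0) + ∫ τ in (0:ℝ)..t, K τ := by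
    rw [← ibp, intervalIntegral.integral_sub (intOn contΨ₂ ht) (intOn contK ht), hHdef]
    abel
  -- push (C * exp tA) through
  have hΦ0 : Φ 0 = (B * Υ).mulVec (e 0) := by
    simp [hΦdef, exp_zero_eq, Matrix.one_mulVec]
  have hExpC : C * NormedSpace.exp (t • A) *
      (NormedSpace.exp ((-t) • A) * (B * Υ)) = C * B * Υ := by
    rw [Matrix.mul_assoc C, ← Matrix.mul_assoc (NormedSpace.exp (t • A)),
      exp_mul_exp_neg, Matrix.one_mul, ← Matrix.mul_assoc]
  have hΦt : (C * NormedSpace.exp (t • A)).mulVec (Φ t) = (C * B * Υ).mulVec (e t) := by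
    simp only [hΦdef, Matrix.mulVec_mulVec, hExpC]
  have hK : (C * NormedSpace.exp (t • A)).mulVec (∫ τ in (0:ℝ)..t, K τ)
      = ∫ τ in (0:ℝ)..t,
          (C * A * NormedSpace.exp ((t - τ) • A) * B * Υ).mulVec (e τ) := by
    have hcomm := (mvCLM (C * NormedSpace.exp (t • A))).intervalIntegral_comp_comm
      (intOn contK ht)
    rw [mvCLM_apply] at hcomm
    rw [← hcomm]
    refine intervalIntegral.integral_congr (fun τ _ => ?_)
    have hmat : C * NormedSpace.exp (t • A) *
        (A * (NormedSpace.exp ((-τ) • A) * (B * Υ)))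
        = C * A * NormedSpace.exp ((t - τ) • A) * B * Υ := by
      rw [exp_sub_eq]
      simp only [← Matrix.mul_assoc]
      rw [Matrix.mul_assoc C (NormedSpace.exp (t • A)) A, ← exp_comm, ← Matrix.mul_assoc]
    simp only [mvCLM_apply, hKdef, Matrix.mulVec_mulVec, hmat]
  -- final assembly
  have key : yv t - yu t =
      (C * B * Υ).mulVec (e t) - (C * NormedSpace.exp (t • A) * B * Υ).mulVec (e 0)
        + ∫ τ in (0:ℝ)..t,
            (C * A * NormedSpace.exp ((t - τ) • A) * B * Υ).mulVec (e τ) := by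
    rw [diff_eq, Hsplit]
    rw [Matrix.mulVec_add, Matrix.mulVec_sub, hΦt, hΦ0, hK, Matrix.mulVec_mulVec,
      ← Matrix.mul_assoc]
  have hyd_yv : yd t - yv t = e t - (yv t - yu t) := by
    rw [he t]; abel
  rw [hyd_yv, key, Matrix.sub_mulVec, Matrix.one_mulVec]
  abel
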